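/- Let f, g : ℝᵐ → ℝ be smooth functions with compact support contained in ℝᵐ \ {0}. Then for every i = 1,…,m, ∫_{ℝᵐ} (D_i f)(x) g(x) h(x) dx = − ∫_{ℝᵐ} f(x) (D_i g)(x) h(x) dx, where h(x) = ‖x‖^{ a/2 + (2b − 1 − c m)/(1+c) }. (Integration by parts for the components of the deformed Dirac operator with its associated measure, in the case of trivial multiplicity function k = 0.) -/

import Mathlib

open Real

/-- `i`-th partial derivative of a scalar function on Euclidean space. -/
noncomputable def pd {m : ℕ} (i : Fin m) (f : EuclideanSpace ℝ (Fin m) → ℝ)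
    (x : EuclideanSpace ℝ (Fin m)) : ℝ :=
  fderiv ℝ f x (EuclideanSpace.single i 1)

/-- Euler operator `E f (x) = ∑ j, x j * ∂_j f (x)`. -/
noncomputable def euler {m : ℕ} (f : EuclideanSpace ℝ (Fin m) → ℝ)
    (x : EuclideanSpace ℝ (Fin m)) : ℝ :=
  ∑ j, x j * pd j f x

/-- Components `D_i` of the deformed Dirac operator (trivial multiplicity `k = 0`). -/
noncomputable def Dop {m : ℕ} (a b c : ℝ) (i : Fin m)
    (f : EuclideanSpace ℝ (Fin m) → ℝ) (x : EuclideanSpace ℝ (Fin m)) : ℝ :=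
  ‖x‖ ^ (1 - a / 2) * pd i f x + b * ‖x‖ ^ (-(a / 2) - 1) * x i * f x
    + c * ‖x‖ ^ (-(a / 2) - 1) * x i * euler f x

open MeasureTheory

section Helpers

variable {m : ℕ}

lemma rpow_norm_eq (q : ℝ) (y : EuclideanSpace ℝ (Fin m)) :
    ‖y‖ ^ q = (‖y‖ ^ 2) ^ (q / 2) := by
  rw [← Real.rpow_natCast ‖y‖ 2, ← Real.rpow_mul (norm_nonneg y)]
  congr 1; push_cast; ring

lemma hasFDerivAt_rpow_norm (q : ℝ) {x : EuclideanSpace ℝ (Fin m)} (hx : x ≠ 0) :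
    HasFDerivAt (fun y : EuclideanSpace ℝ (Fin m) => ‖y‖ ^ q)
      ((q * ‖x‖ ^ (q - 2)) • innerSL ℝ x) x := by
  have hpos : (0:ℝ) < ‖x‖ := norm_pos_iff.mpr hx
  have h2 : (0:ℝ) < ‖x‖ ^ 2 := by positivity
  have hN : HasFDerivAt (fun y : EuclideanSpace ℝ (Fin m) => ‖y‖ ^ 2)
      ((2:ℕ) • innerSL ℝ x) x := (hasStrictFDerivAt_norm_sq x).hasFDerivAt
  have hr : HasDerivAt (fun t : ℝ => t ^ (q / 2)) (q / 2 * (‖x‖ ^ 2) ^ (q / 2 - 1)) (‖x‖ ^ 2) :=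
    Real.hasDerivAt_rpow_const (Or.inl h2.ne')
  have h := hr.comp_hasFDerivAt x hN
  have hfun : ((fun t : ℝ => t ^ (q / 2)) ∘ fun y : EuclideanSpace ℝ (Fin m) => ‖y‖ ^ 2)
      = fun y : EuclideanSpace ℝ (Fin m) => ‖y‖ ^ q := by
    ext y; simp only [Function.comp]; rw [rpow_norm_eq]
  rw [hfun] at h
  refine h.congr_fderiv ?_
  have hxx : (‖x‖ ^ 2) ^ (q / 2 - 1) = ‖x‖ ^ (q - 2) := by
    rw [← Real.rpow_natCast ‖x‖ 2, ← Real.rpow_mul (norm_nonneg x)]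
    congr 1; push_cast; ring
  ext y
  simp [hxx]
  ring

lemma pd_eq {f : EuclideanSpace ℝ (Fin m) → ℝ} {D : EuclideanSpace ℝ (Fin m) →L[ℝ] ℝ}
    {x : EuclideanSpace ℝ (Fin m)} (h : HasFDerivAt f D x) (j : Fin m) :
    pd j f x = D (EuclideanSpace.single j 1) := by
  unfold pd; rw [h.fderiv]

lemma pd_mul {f g : EuclideanSpace ℝ (Fin m) → ℝ} {x : EuclideanSpace ℝ (Fin m)}
    (hf : DifferentiableAt ℝ f x) (hg : DifferentiableAt ℝ g x) (j : Fin m) :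
    pd j (fun y => f y * g y) x = pd j f x * g x + f x * pd j g x := by
  unfold pd
  rw [fderiv_fun_mul hf hg]
  simp
  ring

lemma pd_add {f g : EuclideanSpace ℝ (Fin m) → ℝ} {x : EuclideanSpace ℝ (Fin m)}
    (hf : DifferentiableAt ℝ f x) (hg : DifferentiableAt ℝ g x) (j : Fin m) :
    pd j (fun y => f y + g y) x = pd j f x + pd j g x := by
  unfold pd; rw [fderiv_fun_add hf hg]; simp

lemma pd_const_mul {f : EuclideanSpace ℝ (Fin m) → ℝ} {x : EuclideanSpace ℝ (Fin m)}
    (hf : DifferentiableAt ℝ f x) (c : ℝ) (j : Fin m) :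
    pd j (fun y => c * f y) x = c * pd j f x := by
  unfold pd; rw [fderiv_const_mul hf]; simp

lemma hasFDerivAt_coord (i : Fin m) (x : EuclideanSpace ℝ (Fin m)) :
    HasFDerivAt (𝕜 := ℝ) (fun y : EuclideanSpace ℝ (Fin m) => y i) (EuclideanSpace.proj i) x :=
  (EuclideanSpace.proj (𝕜 := ℝ) i).hasFDerivAt

lemma diffAt_coord (i : Fin m) (x : EuclideanSpace ℝ (Fin m)) :
    DifferentiableAt ℝ (fun y : EuclideanSpace ℝ (Fin m) => y i) x :=
  (hasFDerivAt_coord i x).differentiableAt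

lemma cont_coord (i : Fin m) : Continuous (fun y : EuclideanSpace ℝ (Fin m) => y i) :=
  (EuclideanSpace.proj (𝕜 := ℝ) i).continuous

lemma contDiff_coord (i : Fin m) : ContDiff ℝ (⊤ : ℕ∞) (fun y : EuclideanSpace ℝ (Fin m) => y i) :=
  (EuclideanSpace.proj (𝕜 := ℝ) i).contDiff

lemma pd_coord (i j : Fin m) (x : EuclideanSpace ℝ (Fin m)) :
    pd j (fun y => y i) x = if i = j then 1 else 0 := by
  rw [pd_eq (hasFDerivAt_coord i x)]
  simp [EuclideanSpace.single_apply]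

lemma pd_rpow_norm (q : ℝ) {x : EuclideanSpace ℝ (Fin m)} (hx : x ≠ 0) (j : Fin m) :
    pd j (fun y => ‖y‖ ^ q) x = q * ‖x‖ ^ (q - 2) * x j := by
  rw [pd_eq (hasFDerivAt_rpow_norm q hx)]
  simp [EuclideanSpace.inner_single_right]

lemma sum_coord_sq (x : EuclideanSpace ℝ (Fin m)) : ∑ j, x j * x j = ‖x‖ ^ 2 := by
  rw [← real_inner_self_eq_norm_sq]
  simp only [PiLp.inner_apply, RCLike.inner_apply, conj_trivial]

lemma contDiffAt_rpow_norm (q : ℝ) {x : EuclideanSpace ℝ (Fin m)} (hx : x ≠ 0) :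
    ContDiffAt ℝ (⊤ : ℕ∞) (fun y : EuclideanSpace ℝ (Fin m) => ‖y‖ ^ q) x := by
  have hn : (0:ℝ) < ‖x‖ := norm_pos_iff.mpr hx
  have h2 : (0:ℝ) < ‖x‖ ^ 2 := by positivity
  have : ContDiffAt ℝ (⊤ : ℕ∞) (fun y : EuclideanSpace ℝ (Fin m) => (‖y‖ ^ 2) ^ (q / 2)) x :=
    (Real.contDiffAt_rpow_const_of_ne h2.ne').comp x (contDiff_norm_sq ℝ).contDiffAt
  refine this.congr_of_eventuallyEq ?_
  filter_upwards with y
  rw [rpow_norm_eq]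

lemma contAt_rpow_norm (q : ℝ) {x : EuclideanSpace ℝ (Fin m)} (hx : x ≠ 0) :
    ContinuousAt (fun y : EuclideanSpace ℝ (Fin m) => ‖y‖ ^ q) x :=
  (contDiffAt_rpow_norm q hx).continuousAt

lemma cont_pd {f : EuclideanSpace ℝ (Fin m) → ℝ} (hf : ContDiff ℝ (⊤ : ℕ∞) f) (i : Fin m) :
    Continuous (pd i f) := by
  unfold pd
  exact (hf.continuous_fderiv (by simp)).clm_apply continuous_const

lemma cont_euler {f : EuclideanSpace ℝ (Fin m) → ℝ} (hf : ContDiff ℝ (⊤ : ℕ∞) f) :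
    Continuous (euler f) := by
  unfold euler
  exact continuous_finset_sum _ fun j _ => (cont_coord j).mul (cont_pd hf j)

lemma contDiff_rpow_mul {u : EuclideanSpace ℝ (Fin m) → ℝ} (hu : ContDiff ℝ (⊤ : ℕ∞) u)
    (hus : tsupport u ⊆ {(0 : EuclideanSpace ℝ (Fin m))}ᶜ) (q : ℝ) :
    ContDiff ℝ (⊤ : ℕ∞) (fun y : EuclideanSpace ℝ (Fin m) => ‖y‖ ^ q * u y) := by
  rw [contDiff_iff_contDiffAt]
  intro x
  by_cases hx : x ∈ tsupport u
  · exact ((contDiffAt_rpow_norm q (by simpa using hus hx)).mul hu.contDiffAt)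
  · have hop : IsOpen (tsupport u)ᶜ := (isClosed_tsupport u).isOpen_compl
    refine ContDiffAt.congr_of_eventuallyEq (contDiffAt_const (c := (0:ℝ))) ?_
    filter_upwards [hop.mem_nhds hx] with y hy
    simp [image_eq_zero_of_notMem_tsupport hy]

lemma integral_pd_eq_zero {φ : EuclideanSpace ℝ (Fin m) → ℝ} (hφ : ContDiff ℝ (⊤ : ℕ∞) φ)
    (hφc : HasCompactSupport φ) (j : Fin m) :
    ∫ x : EuclideanSpace ℝ (Fin m), pd j φ x = 0 := by
  have hder : Continuous fun x : EuclideanSpace ℝ (Fin m) =>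
      fderiv ℝ φ x (EuclideanSpace.single j 1) :=
    (hφ.continuous_fderiv (by simp)).clm_apply continuous_const
  have hdc : HasCompactSupport fun x : EuclideanSpace ℝ (Fin m) =>
      fderiv ℝ φ x (EuclideanSpace.single j 1) :=
    hφc.fderiv_apply ℝ (EuclideanSpace.single j 1)
  have key := integral_mul_fderiv_eq_neg_fderiv_mul_of_integrable
    (μ := (volume : Measure (EuclideanSpace ℝ (Fin m)))) (f := φ) (g := fun _ => (1:ℝ))
    (v := EuclideanSpace.single j 1)
    ?_ ?_ ?_ (fun x _ => hφ.differentiable (by simp) x) (fun x _ => differentiable_const 1 x)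
  · have h2 : (fun x : EuclideanSpace ℝ (Fin m) =>
        φ x * fderiv ℝ (fun _ => (1:ℝ)) x (EuclideanSpace.single j 1)) = fun _ => (0:ℝ) := by
      ext x; simp [fderiv_const]
    rw [h2] at key
    simp only [integral_zero] at key
    have h3 := key.symm
    rw [neg_eq_zero] at h3
    unfold pd
    simpa using h3
  · exact (hder.mul continuous_const).integrable_of_hasCompactSupport hdc.mul_right
  · have h2 : (fun x : EuclideanSpace ℝ (Fin m) =>
        φ x * fderiv ℝ (fun _ => (1:ℝ)) x (EuclideanSpace.single j 1)) = fun _ => (0:ℝ) := by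
      ext x; simp [fderiv_const]
    rw [h2]; exact integrable_zero _ _ _
  · exact ((hφ.continuous).mul continuous_const).integrable_of_hasCompactSupport hφc.mul_right

lemma integrable_helper {F ψ : EuclideanSpace ℝ (Fin m) → ℝ} (hψc : HasCompactSupport ψ)
    (hψs : tsupport ψ ⊆ {(0 : EuclideanSpace ℝ (Fin m))}ᶜ)
    (hF0 : ∀ x, ψ x = 0 → F x = 0)
    (hFc : ∀ x : EuclideanSpace ℝ (Fin m), x ≠ 0 → ContinuousAt F x) :
    Integrable F (volume : Measure (EuclideanSpace ℝ (Fin m))) := by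
  have hsupp : Function.support F ⊆ tsupport ψ := fun x hx => by
    by_contra h
    exact hx (hF0 x (image_eq_zero_of_notMem_tsupport h))
  have hFcs : HasCompactSupport F := hψc.mono' hsupp
  have hcont : Continuous F := by
    rw [continuous_iff_continuousAt]
    intro x
    by_cases hx : x ∈ tsupport ψ
    · exact hFc x (by simpa using hψs hx)
    · have hop : IsOpen (tsupport ψ)ᶜ := (isClosed_tsupport ψ).isOpen_compl
      refine ContinuousAt.congr (continuousAt_const (y := (0:ℝ))) ?_
      filter_upwards [hop.mem_nhds hx] with y hy
      exact (hF0 y (image_eq_zero_of_notMem_tsupport hy)).symm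
  exact hcont.integrable_of_hasCompactSupport hFcs

end Helpers

theorem stmt_8 (m : ℕ) (hm : 1 ≤ m) (a b c : ℝ) (hc : c ≠ -1)
    (f g : EuclideanSpace ℝ (Fin m) → ℝ)
    (hf : ContDiff ℝ (⊤ : ℕ∞) f) (hg : ContDiff ℝ (⊤ : ℕ∞) g)
    (hfc : HasCompactSupport f) (hgc : HasCompactSupport g)
    (hfs : tsupport f ⊆ {(0 : EuclideanSpace ℝ (Fin m))}ᶜ)
    (hgs : tsupport g ⊆ {(0 : EuclideanSpace ℝ (Fin m))}ᶜ)
    (i : Fin m) :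
    ∫ x, Dop a b c i f x * g x * ‖x‖ ^ (a / 2 + (2 * b - 1 - c * m) / (1 + c))
      = -∫ x, f x * Dop a b c i g x * ‖x‖ ^ (a / 2 + (2 * b - 1 - c * m) / (1 + c)) := by
  haveI : Nonempty (Fin m) := ⟨⟨0, hm⟩⟩
  set δ : ℝ := (2 * b - 1 - c * m) / (1 + c) with hδdef
  have hc1 : (1 + c) ≠ 0 := fun h => hc (by linarith)
  have hδ : δ * (1 + c) = 2 * b - 1 - c * m := div_mul_cancel₀ _ hc1
  set u : EuclideanSpace ℝ (Fin m) → ℝ := fun y => f y * g y with hudef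
  have huc : ContDiff ℝ (⊤ : ℕ∞) u := hf.mul hg
  have hucs : HasCompactSupport u := hfc.mul_right
  have hus : tsupport u ⊆ {(0 : EuclideanSpace ℝ (Fin m))}ᶜ :=
    subset_trans tsupport_mul_subset_left hfs
  set V : Fin m → EuclideanSpace ℝ (Fin m) → ℝ := fun j y =>
    c * (y i * (y j * (‖y‖ ^ (δ - 1) * u y)))
      + (if j = i then (1:ℝ) else 0) * (‖y‖ ^ (δ + 1) * u y) with hVdef
  have hVsm : ∀ j, ContDiff ℝ (⊤ : ℕ∞) (V j) := fun j =>
    (contDiff_const.mul ((contDiff_coord i).mul ((contDiff_coord j).mul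
      (contDiff_rpow_mul huc hus (δ - 1))))).add
      (contDiff_const.mul (contDiff_rpow_mul huc hus (δ + 1)))
  have hVcs : ∀ j, HasCompactSupport (V j) := by
    intro j
    refine hucs.mono' ?_
    intro y hy
    by_contra h
    exact hy (by simp [hVdef, image_eq_zero_of_notMem_tsupport h])
  -- main pointwise identity
  have hkey : ∀ x : EuclideanSpace ℝ (Fin m), x ≠ 0 →
      Dop a b c i f x * g x * ‖x‖ ^ (a / 2 + δ) + f x * Dop a b c i g x * ‖x‖ ^ (a / 2 + δ)
        = ∑ j, pd j (V j) x := by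
    intro x hx
    have hr : (0:ℝ) < ‖x‖ := norm_pos_iff.mpr hx
    have hdu : DifferentiableAt ℝ u x := huc.differentiable (by simp) x
    have hdf : DifferentiableAt ℝ f x := hf.differentiable (by simp) x
    have hdg : DifferentiableAt ℝ g x := hg.differentiable (by simp) x
    have hdq : ∀ q : ℝ, DifferentiableAt ℝ
        (fun y : EuclideanSpace ℝ (Fin m) => ‖y‖ ^ q) x :=
      fun q => (hasFDerivAt_rpow_norm q hx).differentiableAt
    have hdP : ∀ q : ℝ, DifferentiableAt ℝ
        (fun y : EuclideanSpace ℝ (Fin m) => ‖y‖ ^ q * u y) x := fun q => (hdq q).mul hdu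
    have pdP : ∀ (q : ℝ) (j : Fin m), pd j (fun y => ‖y‖ ^ q * u y) x
        = q * ‖x‖ ^ (q - 2) * x j * u x + ‖x‖ ^ q * pd j u x := by
      intro q j
      rw [pd_mul (hdq q) hdu j, pd_rpow_norm q hx j]
    have pdu : ∀ j : Fin m, pd j u x = pd j f x * g x + f x * pd j g x := by
      intro j
      rw [hudef]
      exact pd_mul hdf hdg j
    have hux : u x = f x * g x := rfl
    have heu : euler u x = euler f x * g x + f x * euler g x := by
      simp only [euler]
      rw [Finset.sum_mul, Finset.mul_sum, ← Finset.sum_add_distrib]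
      exact Finset.sum_congr rfl fun j _ => by rw [pdu j]; ring
    have e1 : ‖x‖ ^ (1 - a / 2) * ‖x‖ ^ (a / 2 + δ) = ‖x‖ ^ (δ + 1) := by
      rw [← Real.rpow_add hr]; congr 1; ring
    have e2 : ‖x‖ ^ (-(a / 2) - 1) * ‖x‖ ^ (a / 2 + δ) = ‖x‖ ^ (δ - 1) := by
      rw [← Real.rpow_add hr]; congr 1; ring
    have e3 : ‖x‖ ^ (δ - 1 - 2) * ‖x‖ ^ 2 = ‖x‖ ^ (δ - 1) := by
      rw [← Real.rpow_natCast ‖x‖ 2, ← Real.rpow_add hr]; congr 1; push_cast; ring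
    have e4 : ‖x‖ ^ (δ + 1 - 2) = ‖x‖ ^ (δ - 1) := by congr 1; ring
    set T : ℝ := ‖x‖ ^ (δ + 1) * (pd i f x * g x + f x * pd i g x)
      + 2 * b * (‖x‖ ^ (δ - 1) * x i * (f x * g x))
      + c * ‖x‖ ^ (δ - 1) * x i * (euler f x * g x + f x * euler g x) with hTdef
    have hpdV : ∀ j : Fin m, pd j (V j) x =
        c * ((if i = j then (1:ℝ) else 0) * (x j * (‖x‖ ^ (δ - 1) * u x))
          + x i * ((if j = j then (1:ℝ) else 0) * (‖x‖ ^ (δ - 1) * u x)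
            + x j * ((δ - 1) * ‖x‖ ^ (δ - 1 - 2) * x j * u x + ‖x‖ ^ (δ - 1) * pd j u x)))
        + (if j = i then (1:ℝ) else 0)
            * ((δ + 1) * ‖x‖ ^ (δ + 1 - 2) * x j * u x + ‖x‖ ^ (δ + 1) * pd j u x) := by
      intro j
      have h1 : DifferentiableAt ℝ (fun y : EuclideanSpace ℝ (Fin m) =>
          y j * (‖y‖ ^ (δ - 1) * u y)) x := (diffAt_coord j x).mul (hdP _)
      have h2 : DifferentiableAt ℝ (fun y : EuclideanSpace ℝ (Fin m) =>
          y i * (y j * (‖y‖ ^ (δ - 1) * u y))) x := (diffAt_coord i x).mul h1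
      simp only [hVdef]
      rw [pd_add (h2.const_mul c) ((hdP (δ + 1)).const_mul _) j, pd_const_mul h2 c j,
        pd_const_mul (hdP (δ + 1)) _ j, pd_mul (diffAt_coord i x) h1 j,
        pd_mul (diffAt_coord j x) (hdP (δ - 1)) j, pd_coord i j, pd_coord j j,
        pdP (δ - 1) j, pdP (δ + 1) j]
      norm_num
    have hterm : ∀ j : Fin m, pd j (V j) x =
        ((if i = j then c * (x j * (‖x‖ ^ (δ - 1) * u x)) else 0)
          + (if j = i then ((δ + 1) * ‖x‖ ^ (δ + 1 - 2) * x j * u x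
              + ‖x‖ ^ (δ + 1) * pd j u x) else 0))
        + (c * x i * (‖x‖ ^ (δ - 1) * u x)
          + ((c * (δ - 1) * ‖x‖ ^ (δ - 1 - 2) * u x * x i) * (x j * x j)
            + (c * ‖x‖ ^ (δ - 1) * x i) * (x j * pd j u x))) := by
      intro j
      rw [hpdV j]
      by_cases hij : i = j
      · subst hij
        simp only [if_pos rfl, eq_self_iff_true, if_true]
        ring
      · have hji : ¬ j = i := fun h => hij h.symm
        simp only [if_neg hij, if_neg hji, eq_self_iff_true, if_true]
        ring
    have heuler_u : ∑ j, x j * pd j u x = euler u x := rfl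
    have hsum : ∑ j, pd j (V j) x = T := by
      have hsum0 : ∑ j, pd j (V j) x
          = ∑ j : Fin m, (((if i = j then c * (x j * (‖x‖ ^ (δ - 1) * u x)) else 0)
          + (if j = i then ((δ + 1) * ‖x‖ ^ (δ + 1 - 2) * x j * u x
              + ‖x‖ ^ (δ + 1) * pd j u x) else 0))
        + (c * x i * (‖x‖ ^ (δ - 1) * u x)
          + ((c * (δ - 1) * ‖x‖ ^ (δ - 1 - 2) * u x * x i) * (x j * x j)
            + (c * ‖x‖ ^ (δ - 1) * x i) * (x j * pd j u x)))) :=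
        Finset.sum_congr rfl fun j _ => hterm j
      rw [hsum0]
      simp only [Finset.sum_add_distrib, Finset.sum_ite_eq, Finset.sum_ite_eq',
        Finset.mem_univ, if_true, Finset.sum_const, Finset.card_univ, Fintype.card_fin,
        nsmul_eq_mul, ← Finset.mul_sum]
      rw [sum_coord_sq x, heuler_u, pdu i, heu, hux, hTdef]
      linear_combination (c * (δ - 1) * (f x * g x) * x i) * e3
        + ((δ + 1) * x i * (f x * g x)) * e4
        + (x i * (f x * g x) * ‖x‖ ^ (δ - 1)) * hδ
    rw [hsum, hTdef]
    simp only [Dop]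
    linear_combination (pd i f x * g x + f x * pd i g x) * e1
      + (2 * b * (x i) * (f x * g x) + c * (x i) * (euler f x * g x + f x * euler g x)) * e2
  -- integrability
  have hint1 : Integrable (fun x => Dop a b c i f x * g x * ‖x‖ ^ (a / 2 + δ))
      (volume : Measure (EuclideanSpace ℝ (Fin m))) := by
    refine integrable_helper hgc hgs (fun x h => by simp [h]) (fun x hx => ?_)
    refine ContinuousAt.mul (ContinuousAt.mul ?_ hg.continuous.continuousAt)
      (contAt_rpow_norm _ hx)
    show ContinuousAt (fun y => Dop a b c i f y) x
    simp only [Dop]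
    exact (((contAt_rpow_norm _ hx).mul ((cont_pd hf i).continuousAt)).add
      (((continuousAt_const.mul (contAt_rpow_norm _ hx)).mul
        ((cont_coord i).continuousAt)).mul hf.continuous.continuousAt)).add
      (((continuousAt_const.mul (contAt_rpow_norm _ hx)).mul
        ((cont_coord i).continuousAt)).mul (cont_euler hf).continuousAt)
  have hint2 : Integrable (fun x => f x * Dop a b c i g x * ‖x‖ ^ (a / 2 + δ))
      (volume : Measure (EuclideanSpace ℝ (Fin m))) := by
    refine integrable_helper hfc hfs (fun x h => by simp [h]) (fun x hx => ?_)
    refine ContinuousAt.mul (ContinuousAt.mul hf.continuous.continuousAt ?_)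
      (contAt_rpow_norm _ hx)
    show ContinuousAt (fun y => Dop a b c i g y) x
    simp only [Dop]
    exact (((contAt_rpow_norm _ hx).mul ((cont_pd hg i).continuousAt)).add
      (((continuousAt_const.mul (contAt_rpow_norm _ hx)).mul
        ((cont_coord i).continuousAt)).mul hg.continuous.continuousAt)).add
      (((continuousAt_const.mul (contAt_rpow_norm _ hx)).mul
        ((cont_coord i).continuousAt)).mul (cont_euler hg).continuousAt)
  have hintV : ∀ j : Fin m, Integrable (fun x => pd j (V j) x)
      (volume : Measure (EuclideanSpace ℝ (Fin m))) := by
    intro j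
    have : Continuous (pd j (V j)) := cont_pd (hVsm j) j
    refine this.integrable_of_hasCompactSupport ?_
    exact (hVcs j).fderiv_apply ℝ (EuclideanSpace.single j 1)
  -- conclusion
  have hzero : ∫ x, (Dop a b c i f x * g x * ‖x‖ ^ (a / 2 + δ)
      + f x * Dop a b c i g x * ‖x‖ ^ (a / 2 + δ)) = 0 := by
    have hvol : (volume : Measure (EuclideanSpace ℝ (Fin m))) {0} = 0 := measure_singleton 0
    have hae : ∀ᵐ x : EuclideanSpace ℝ (Fin m) ∂volume,
        x ∈ ({(0 : EuclideanSpace ℝ (Fin m))}ᶜ : Set (EuclideanSpace ℝ (Fin m))) :=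
      compl_mem_ae_iff.mpr hvol
    rw [integral_congr_ae (g := fun x => ∑ j, pd j (V j) x)
      (by filter_upwards [hae] with x hx using hkey x hx)]
    rw [integral_finset_sum _ (fun j _ => hintV j)]
    exact Finset.sum_eq_zero fun j _ => integral_pd_eq_zero (hVsm j) (hVcs j) j
  rw [integral_add hint1 hint2] at hzero
  linarith
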